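/- For every nonempty finite sequence I = (a_1,…,a_n) of positive integers, the following identity holds in 𝓕₂*: Σ_{I' ∈ C(I^{-1})} S_{I'} = Σ_{β ∈ P(I)} S_{β(1)} · S_{β(2)} ⋯ S_{β(l(β))}, where I^{-1} is the reversal of I. (Both sides equal the conjugation χ(S_I) of the mod 2 dual Leibniz–Hopf algebra.) -/

import Mathlib

/-- The overlapping shuffle product of two finite sequences, as a multiset
(counting multiplicities). -/
def osp : List ℕ → List ℕ → Multiset (List ℕ)
  | A, [] => {A}
  | [], B => {B}
  | a :: A, b :: B =>
      ((osp A (b :: B)).map (a :: ·)) +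
      ((osp (a :: A) B).map (b :: ·)) +
      ((osp A B).map ((a + b) :: ·))
termination_by A B => A.length + B.length
decreasing_by all_goals (simp only [List.length_cons]; omega)

/-- The underlying free module over `ZMod 2` on the set of finite sequences
(this carries the mod 2 dual Leibniz--Hopf algebra `𝓕₂*`). -/
abbrev F2D : Type := (List ℕ) →₀ ZMod 2

/-- The basis element `S_I`. -/
noncomputable def sElem (I : List ℕ) : F2D := Finsupp.single I 1

/-- The element of `𝓕₂*` associated to a multiset of sequences, keeping
multiplicities mod 2. -/
noncomputable def ofMS (m : Multiset (List ℕ)) : F2D := (m.map sElem).sum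

/-- The bilinear product of `𝓕₂*`: on basis elements,
`S_I · S_J = Σ_K (multiplicity of K in osp I J mod 2) • S_K`. -/
noncomputable def fmul (x y : F2D) : F2D :=
  x.sum fun I a => y.sum fun J b => (a * b) • ofMS (osp I J)

/-- Product of a list of elements of `𝓕₂*` (with `S_{()}` the unit). -/
noncomputable def fprod : List F2D → F2D
  | [] => sElem []
  | x :: xs => fmul x (fprod xs)

/-- The coarsening set `C(I)`: all sequences obtained from `I` by summing
consecutive blocks of entries.  (`C([]) = {[]}` by convention.) -/
def coars : List ℕ → Finset (List ℕ)
  | [] => {[]}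
  | [i] => {[i]}
  | i :: j :: rest =>
      ((coars (j :: rest)).image (i :: ·)) ∪
      ((coars (j :: rest)).image (fun I' => (i + I'.headD 0) :: I'.tail))

/-- The set of ordered block partitions of a sequence: lists of consecutive
nonempty blocks whose concatenation is the given sequence. -/
def obp : List ℕ → Finset (List (List ℕ))
  | [] => {[]}
  | a :: rest =>
      (Finset.range (rest.length + 1)).attach.biUnion fun k =>
        (obp (rest.drop k.1)).image fun β => (a :: rest.take k.1) :: β
termination_by l => l.length
decreasing_by simp

/-! Write `χ(I) = Σ_{I' ∈ C(I⁻¹)} S_{I'}`. Expanding the first block of `β` shows that the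
right-hand side `R(I)` satisfies `R(a :: L) = Σ_k S_{a :: L[:k]} · R(L[k:])`, so it suffices that
`χ` obeys the same recursion, i.e. the antipode relation `Σ_{j=0}^{n} S_{I[:j]} · χ(I[j:]) = 0`
for nonempty `I`.

Reversal commutes with the overlapping shuffle and with coarsening, so the relation becomes
`Σ_j Σ_{K ∈ C(I[j:])} S_{I[:j]⁻¹} · S_K = 0`. Sort the terms of `S_{p :: P} · S_K` by whether
their first entry is the first entry of `K` alone: the other terms start with `p` or with
`p + K₁`, and these are exactly the terms of `S_P · S_{K'}` led by the first entry of `K'`, for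
`K'` running over `C(p :: L)` when `K` runs over `C(L)`. So if `V_j` collects the terms of the
`j`-th summand led by an entry of `K` alone, that summand is `V_j + V_{j-1}`, and the sum
telescopes to `2 Σ_j V_j = 0`. Positivity makes the two halves of `C(p :: L)` disjoint. -/

@[simp] lemma osp_nil_right (A : List ℕ) : osp A [] = {A} := by
  cases A <;> simp [osp]

@[simp] lemma osp_nil_left (B : List ℕ) : osp [] B = {B} := by
  cases B <;> simp [osp]

lemma osp_cons_cons (a b : ℕ) (A B : List ℕ) :
    osp (a :: A) (b :: B) =
      (osp A (b :: B)).map (a :: ·) + (osp (a :: A) B).map (b :: ·) +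
        (osp A B).map ((a + b) :: ·) := by
  rw [osp]

lemma osp_append_singleton (a b : ℕ) (X Y : List ℕ) :
    osp (X ++ [a]) (Y ++ [b]) =
      (osp X (Y ++ [b])).map (· ++ [a]) + (osp (X ++ [a]) Y).map (· ++ [b]) +
        (osp X Y).map (· ++ [a + b]) := by
  induction X generalizing Y with
  | nil =>
    induction Y with
    | nil => simp [osp_cons_cons, add_comm]
    | cons y Y ih =>
      simp only [List.nil_append] at ih
      simp only [List.nil_append, List.cons_append, osp_cons_cons, ih]
      simp only [Multiset.map_add, Multiset.map_map, Function.comp_def, osp_nil_left,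
        Multiset.map_singleton, List.cons_append]
      abel
  | cons x X ihX =>
    induction Y with
    | nil =>
      have h := ihX []
      simp only [List.nil_append] at h
      simp only [List.nil_append, List.cons_append, osp_cons_cons, h]
      simp only [Multiset.map_add, Multiset.map_map, Function.comp_def, osp_nil_right,
        Multiset.map_singleton, List.cons_append]
      abel
    | cons y Y ihY =>
      have h := ihX (y :: Y)
      simp only [List.cons_append] at h ihY
      simp only [List.cons_append, osp_cons_cons, h, ihX Y, ihY]
      simp only [Multiset.map_add, Multiset.map_map, Function.comp_def, List.cons_append]
      abel

lemma map_reverse_osp (A B : List ℕ) :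
    (osp A B).map List.reverse = osp A.reverse B.reverse := by
  induction A, B using osp.induct with
  | case1 A => simp
  | case2 B => simp
  | case3 a A b B ih₁ ih₂ ih₃ =>
    have h (c : ℕ) : List.reverse ∘ (c :: ·) = (· ++ [c]) ∘ List.reverse :=
      funext fun _ => List.reverse_cons
    rw [osp_cons_cons, Multiset.map_add, Multiset.map_add, Multiset.map_map, Multiset.map_map,
      Multiset.map_map, h, h, h, ← Multiset.map_map, ← Multiset.map_map, ← Multiset.map_map,
      ih₁, ih₂, ih₃, List.reverse_cons, List.reverse_cons, osp_append_singleton]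

def addToHead (a : ℕ) (K : List ℕ) : List ℕ := (a + K.headD 0) :: K.tail

def addToLast (a : ℕ) (K : List ℕ) : List ℕ := K.dropLast ++ [K.getLastD 0 + a]

lemma reverse_addToHead (a : ℕ) (K : List ℕ) :
    (addToHead a K).reverse = addToLast a K.reverse := by
  cases K <;> simp [addToHead, addToLast, add_comm]

lemma coars_cons (a : ℕ) {L : List ℕ} (hL : L ≠ []) :
    coars (a :: L) = (coars L).image (a :: ·) ∪ (coars L).image (addToHead a) := by
  cases L with
  | nil => contradiction
  | cons => rfl

lemma ne_nil_of_mem_coars {L K : List ℕ} (hL : L ≠ []) (hK : K ∈ coars L) : K ≠ [] := by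
  rcases L with _ | ⟨i, _ | ⟨j, rest⟩⟩
  · contradiction
  · simp_all [coars]
  · rw [coars_cons i (List.cons_ne_nil j rest)] at hK
    simp only [Finset.mem_union, Finset.mem_image, addToHead] at hK
    rcases hK with ⟨_, _, rfl⟩ | ⟨_, _, rfl⟩ <;> simp

lemma headD_le_headD_of_mem_coars {L K : List ℕ} (hK : K ∈ coars L) :
    L.headD 0 ≤ K.headD 0 := by
  rcases L with _ | ⟨i, _ | ⟨j, rest⟩⟩
  · simp_all [coars]
  · simp_all [coars]
  · rw [coars_cons i (List.cons_ne_nil j rest)] at hK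
    simp only [Finset.mem_union, Finset.mem_image, addToHead] at hK
    rcases hK with ⟨_, _, rfl⟩ | ⟨_, _, rfl⟩ <;> simp

lemma coars_append_singleton (x : ℕ) {L : List ℕ} (hL : L ≠ []) :
    coars (L ++ [x]) = (coars L).image (· ++ [x]) ∪ (coars L).image (addToLast x) := by
  induction L using coars.induct with
  | case1 => contradiction
  | case2 i => simp [coars, addToLast]
  | case3 i j rest ih =>
    have hne : ∀ K ∈ coars (j :: rest), K ≠ [] :=
      fun K => ne_nil_of_mem_coars (List.cons_ne_nil _ _)
    rw [List.cons_append, coars_cons i (by simp), ih (List.cons_ne_nil _ _),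
      coars_cons i (List.cons_ne_nil _ _)]
    simp only [Finset.image_union, Finset.image_image]
    rw [Finset.union_union_union_comm]
    congr 2
    all_goals
      refine Finset.image_congr fun K hK => ?_
      obtain ⟨k, K, rfl⟩ := List.exists_cons_of_ne_nil (hne K hK)
      rcases K with _ | ⟨l, K⟩ <;> simp [addToHead, addToLast, add_assoc]

lemma coars_reverse (L : List ℕ) : coars L.reverse = (coars L).image List.reverse := by
  induction L using coars.induct with
  | case1 => rfl
  | case2 i => rfl
  | case3 i j rest ih =>
    rw [List.reverse_cons, coars_append_singleton i (by simp), ih,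
      coars_cons i (List.cons_ne_nil _ _), Finset.image_union, Finset.image_image,
      Finset.image_image, Finset.image_image, Finset.image_image]
    congr 1 <;> exact Finset.image_congr fun K _ => by simp [reverse_addToHead]

lemma sum_coars_cons {M : Type*} [AddCommMonoid M] (f : List ℕ → M) (a : ℕ) {L : List ℕ}
    (hL : 0 < L.headD 0) :
    ∑ K ∈ coars (a :: L), f K =
      ∑ K ∈ coars L, f (a :: K) + ∑ K ∈ coars L, f (addToHead a K) := by
  have hL' : L ≠ [] := by rintro rfl; simp at hL
  have hne : ∀ K ∈ coars L, K ≠ [] := fun K => ne_nil_of_mem_coars hL'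
  rw [coars_cons a hL', Finset.sum_union, Finset.sum_image List.cons_injective.injOn,
    Finset.sum_image]
  · rintro K hK K' hK' h
    obtain ⟨k, K, rfl⟩ := List.exists_cons_of_ne_nil (hne K hK)
    obtain ⟨k', K', rfl⟩ := List.exists_cons_of_ne_nil (hne K' hK')
    simp only [addToHead, List.headD_cons, List.tail_cons, List.cons.injEq,
      Nat.add_left_cancel_iff] at h
    rw [h.1, h.2]
  · simp only [Finset.disjoint_left, Finset.mem_image]
    rintro _ ⟨K, -, rfl⟩ ⟨K', hK', h⟩
    have := headD_le_headD_of_mem_coars hK'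
    simp only [addToHead, List.cons.injEq] at h
    omega

lemma sum_obp_cons {M : Type*} [AddCommMonoid M] (f : List (List ℕ) → M) (a : ℕ)
    (rest : List ℕ) :
    ∑ β ∈ obp (a :: rest), f β =
      ∑ k ∈ Finset.range (rest.length + 1),
        ∑ β ∈ obp (rest.drop k), f ((a :: rest.take k) :: β) := by
  rw [obp, Finset.sum_biUnion, ← Finset.sum_attach (Finset.range _)]
  · exact Finset.sum_congr rfl fun k _ => Finset.sum_image fun _ _ _ _ h => List.cons_injective h
  · intro k _ k' _ hkk'
    simp only [Function.onFun, Finset.disjoint_left, Finset.mem_image]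
    rintro _ ⟨β, -, rfl⟩ ⟨β', -, h⟩
    have hk := Finset.mem_range.1 k.2
    have hk' := Finset.mem_range.1 k'.2
    have := congrArg List.length (List.cons.inj (List.cons.inj h).1).2
    simp only [List.length_take] at this
    exact hkk' (Subtype.ext (by omega))

lemma F2D.add_self (x : F2D) : x + x = 0 :=
  Finsupp.ext fun _ => CharTwo.add_self_eq_zero _

lemma F2D.eq_of_add_eq_zero {x y : F2D} (h : x + y = 0) : x = y := by
  rw [← add_zero x, ← F2D.add_self y, ← add_assoc, h, zero_add]

lemma ofMS_add (m n : Multiset (List ℕ)) : ofMS (m + n) = ofMS m + ofMS n := by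
  simp [ofMS]

lemma fmul_sElem_sElem (A B : List ℕ) : fmul (sElem A) (sElem B) = ofMS (osp A B) := by
  simp [fmul, sElem]

lemma fmul_sElem_nil (y : F2D) : fmul (sElem []) y = y := by
  simp [fmul, sElem, ofMS, Finsupp.smul_single]

lemma fmul_add_right (x y z : F2D) : fmul x (y + z) = fmul x y + fmul x z := by
  simp only [fmul, ← Finsupp.sum_add]
  refine Finsupp.sum_congr fun I _ => Finsupp.sum_add_index' (by simp) fun J b c => ?_
  rw [mul_add, add_smul]

lemma fmul_sum_right {ι : Type*} (x : F2D) (s : Finset ι) (f : ι → F2D) :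
    fmul x (∑ i ∈ s, f i) = ∑ i ∈ s, fmul x (f i) :=
  map_sum (AddMonoidHom.mk' (fmul x) (fmul_add_right x)) f s

lemma fmul_sElem_sum (A : List ℕ) (s : Finset (List ℕ)) :
    fmul (sElem A) (∑ K ∈ s, sElem K) = ∑ K ∈ s, ofMS (osp A K) := by
  simp only [fmul_sum_right, fmul_sElem_sElem]

noncomputable def reverseF2D : F2D →+ F2D := Finsupp.mapDomain.addMonoidHom List.reverse

lemma reverseF2D_injective : Function.Injective reverseF2D :=
  Finsupp.mapDomain_injective List.reverse_injective

lemma reverseF2D_ofMS (m : Multiset (List ℕ)) :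
    reverseF2D (ofMS m) = ofMS (m.map List.reverse) := by
  simp [reverseF2D, ofMS, map_multiset_sum, Multiset.map_map, sElem, Function.comp_def]

def ospLeadRight (P : List ℕ) : List ℕ → Multiset (List ℕ)
  | [] => 0
  | b :: K => (osp P K).map (b :: ·)

noncomputable def coarsOsp (P L : List ℕ) : F2D := ∑ K ∈ coars L, ofMS (osp P K)

noncomputable def coarsOspLeadRight (P L : List ℕ) : F2D :=
  ∑ K ∈ coars L, ofMS (ospLeadRight P K)

lemma coarsOspLeadRight_nil_right (P : List ℕ) : coarsOspLeadRight P [] = 0 := by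
  simp [coarsOspLeadRight, coars, ospLeadRight, ofMS]

lemma coarsOsp_nil_left {L : List ℕ} (hL : L ≠ []) :
    coarsOsp [] L = coarsOspLeadRight [] L := by
  refine Finset.sum_congr rfl fun K hK => ?_
  obtain ⟨k, K, rfl⟩ := List.exists_cons_of_ne_nil (ne_nil_of_mem_coars hL hK)
  simp [ospLeadRight]

lemma coarsOsp_cons_left (p : ℕ) (P : List ℕ) {L : List ℕ} (hL : ∀ x ∈ L, 0 < x) :
    coarsOsp (p :: P) L = coarsOspLeadRight (p :: P) L + coarsOspLeadRight P (p :: L) := by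
  rcases eq_or_ne L [] with rfl | hne
  · simp [coarsOsp, coarsOspLeadRight, coars, ospLeadRight, ofMS]
  have hhead : 0 < L.headD 0 := by
    obtain ⟨l, L, rfl⟩ := List.exists_cons_of_ne_nil hne
    exact hL l List.mem_cons_self
  unfold coarsOsp coarsOspLeadRight
  rw [sum_coars_cons _ p hhead, ← Finset.sum_add_distrib, ← Finset.sum_add_distrib]
  refine Finset.sum_congr rfl fun K hK => ?_
  obtain ⟨k, K, rfl⟩ := List.exists_cons_of_ne_nil (ne_nil_of_mem_coars hne hK)
  simp only [osp_cons_cons, ospLeadRight, addToHead, List.headD_cons, List.tail_cons, ofMS_add]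
  abel

lemma sum_coarsOsp_take_drop (P L : List ℕ) (hL : ∀ x ∈ L, 0 < x) :
    ∑ j ∈ Finset.range (L.length + 1), coarsOsp ((L.take j).reverse ++ P) (L.drop j) =
      coarsOsp P L + coarsOspLeadRight P L := by
  induction L generalizing P with
  | nil => simp [coarsOspLeadRight_nil_right]
  | cons a L ih =>
    have hL' : ∀ x ∈ L, 0 < x := fun x hx => hL x (List.mem_cons_of_mem a hx)
    rw [List.length_cons, Finset.sum_range_succ']
    simp only [List.take_succ_cons, List.drop_succ_cons, List.reverse_cons, List.append_assoc,
      List.singleton_append, List.take_zero, List.drop_zero, List.reverse_nil, List.nil_append]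
    rw [ih (a :: P) hL', coarsOsp_cons_left a P hL', add_right_comm _ _ (coarsOspLeadRight _ L),
      F2D.add_self, zero_add, add_comm]

lemma sum_coarsOsp_reverse_take_drop {I : List ℕ} (hI : I ≠ []) (hpos : ∀ i ∈ I, 0 < i) :
    ∑ j ∈ Finset.range (I.length + 1), coarsOsp (I.take j).reverse (I.drop j) = 0 := by
  simpa [coarsOsp_nil_left hI, F2D.add_self] using sum_coarsOsp_take_drop [] I hpos

noncomputable def chi (I : List ℕ) : F2D := ∑ K ∈ coars I.reverse, sElem K

lemma reverseF2D_fmul_sElem_chi (A L : List ℕ) :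
    reverseF2D (fmul (sElem A) (chi L)) = coarsOsp A.reverse L := by
  rw [chi, fmul_sElem_sum, map_sum, coars_reverse, Finset.sum_image List.reverse_injective.injOn]
  refine Finset.sum_congr rfl fun K _ => ?_
  rw [reverseF2D_ofMS, map_reverse_osp, List.reverse_reverse]

lemma sum_fmul_sElem_take_chi_drop {I : List ℕ} (hI : I ≠ []) (hpos : ∀ i ∈ I, 0 < i) :
    ∑ j ∈ Finset.range (I.length + 1), fmul (sElem (I.take j)) (chi (I.drop j)) = 0 :=
  reverseF2D_injective <| by
    simp only [map_sum, map_zero, reverseF2D_fmul_sElem_chi,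
      sum_coarsOsp_reverse_take_drop hI hpos]

lemma chi_cons (a : ℕ) (rest : List ℕ) (hpos : ∀ i ∈ a :: rest, 0 < i) :
    chi (a :: rest) =
      ∑ k ∈ Finset.range (rest.length + 1),
        fmul (sElem (a :: rest.take k)) (chi (rest.drop k)) := by
  have key := sum_fmul_sElem_take_chi_drop (List.cons_ne_nil a rest) hpos
  rw [List.length_cons, Finset.sum_range_succ'] at key
  simp only [List.take_succ_cons, List.drop_succ_cons, List.take_zero, List.drop_zero,
    fmul_sElem_nil] at key
  exact (F2D.eq_of_add_eq_zero key).symm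

theorem coars_eq_blockPartitions_general (I : List ℕ) (hpos : ∀ i ∈ I, 0 < i) :
    ∑ I' ∈ coars I.reverse, sElem I' = ∑ β ∈ obp I, fprod (β.map sElem) := by
  induction I using obp.induct with
  | case1 => simp [coars, obp, fprod]
  | case2 a rest ih =>
    rw [← chi, chi_cons a rest hpos, sum_obp_cons]
    refine Finset.sum_congr rfl fun k hk => ?_
    rw [chi, ih ⟨k, hk⟩ fun i hi => hpos i (List.mem_cons_of_mem a (List.mem_of_mem_drop hi)),
      fmul_sum_right]
    rfl

/-- For every nonempty sequence `I` of positive integers, in `𝓕₂*` one has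
`Σ_{I' ∈ C(I⁻¹)} S_{I'} = Σ_{β ∈ P(I)} S_{β(1)} · S_{β(2)} ⋯ S_{β(l(β))}`
(both sides equal the conjugation `χ(S_I)`). -/
theorem coars_eq_blockPartitions (I : List ℕ) (hI : I ≠ []) (hpos : ∀ i ∈ I, 0 < i) :
    ∑ I' ∈ coars I.reverse, sElem I' = ∑ β ∈ obp I, fprod (β.map sElem) :=
  coars_eq_blockPartitions_general I hpos
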